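/- arXiv:2106.05232 — 6 statements merged into one kernel-verified Lean document; each statement's English description precedes it below -/
import Mathlib

section
/- For α ∈ (0,1) ∪ (1,∞), the function f_α(u) = (α/(α-1))·((1 + u^α)^(1/α) − (1+u) − 2^(1/α) + 2) defined for u ≥ 0 is convex. -/
/-!
On `u > 0` the derivative of the generator is
`α / (α - 1) * (1 + u ^ (-α)) ^ (1 / α - 1) - α / (α - 1)`. The base `1 + u ^ (-α)` decreases in `u`,
and the factor `α / (α - 1)` and the exponent `1 / α - 1` have product `-1`, so they have opposite
signs and `t ↦ α / (α - 1) * t ^ (1 / α - 1)` is antitone. Hence the derivative is monotone.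
-/

open Real Set

lemma antitoneOn_mul_rpow_of_mul_nonpos {c s : ℝ} (hcs : c * s ≤ 0) :
    AntitoneOn (fun t : ℝ => c * t ^ s) (Ioi 0) := by
  intro x hx _ _ hxy
  rcases mul_nonpos_iff.mp hcs with ⟨hc, hs⟩ | ⟨hc, hs⟩
  · exact mul_le_mul_of_nonneg_left (rpow_le_rpow_of_nonpos hx hxy hs) hc
  · exact mul_le_mul_of_nonpos_left (rpow_le_rpow (le_of_lt hx) hxy hs) hc

lemma antitoneOn_one_add_rpow_neg {α : ℝ} (hα : 0 ≤ α) :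
    AntitoneOn (fun u : ℝ => 1 + u ^ (-α)) (Ioi 0) := fun _ hx _ _ hxy =>
  add_le_add_right (rpow_le_rpow_of_nonpos hx hxy (neg_nonpos.mpr hα)) 1

lemma hasDerivAt_one_add_rpow_rpow_inv {α u : ℝ} (hα : α ≠ 0) (hu : 0 < u) :
    HasDerivAt (fun u : ℝ => (1 + u ^ α) ^ (1 / α)) ((1 + u ^ (-α)) ^ (1 / α - 1)) u := by
  have hpos : 0 < 1 + u ^ α := by positivity
  have hderiv := ((hasDerivAt_rpow_const (p := α) (Or.inl hu.ne')).const_add 1).rpow_const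
    (p := 1 / α) (Or.inl hpos.ne')
  convert hderiv using 1
  have hbase : 1 + u ^ (-α) = (1 + u ^ α) / u ^ α := by
    rw [rpow_neg hu.le]
    field_simp
    ring
  have hpow : (u ^ α) ^ (1 / α - 1) = u ^ (1 - α) := by
    rw [← rpow_mul hu.le]
    congr 1
    field_simp
  have hcancel : u ^ (α - 1) * u ^ (1 - α) = 1 := by
    rw [← rpow_add hu]
    norm_num
  rw [hbase, div_rpow hpos.le (rpow_pos_of_pos hu α).le, hpow, eq_comm,
    eq_div_iff (rpow_pos_of_pos hu _).ne']
  have hinv : α * (1 / α) = 1 := mul_one_div_cancel hα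
  linear_combination (α * (1 / α) * (1 + u ^ α) ^ (1 / α - 1)) * hcancel +
    (1 + u ^ α) ^ (1 / α - 1) * hinv

lemma continuousOn_one_add_rpow_rpow_inv {α : ℝ} (hα : 0 ≤ α) :
    ContinuousOn (fun u : ℝ => (1 + u ^ α) ^ (1 / α)) (Ici 0) := by
  have hpow : ContinuousOn (fun u : ℝ => u ^ α) (Ici 0) := fun x _ =>
    (continuousAt_rpow_const x α (Or.inr hα)).continuousWithinAt
  exact (continuousOn_const.add hpow).rpow_const fun x hx =>
    Or.inl (add_pos_of_pos_of_nonneg one_pos (rpow_nonneg hx α)).ne'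

lemma convexOn_Ici_of_hasDerivAt_of_monotoneOn {a : ℝ} {f f' : ℝ → ℝ}
    (hf : ContinuousOn f (Ici a)) (hderiv : ∀ u ∈ Ioi a, HasDerivAt f (f' u) u)
    (hmono : MonotoneOn f' (Ioi a)) : ConvexOn ℝ (Ici a) f := by
  refine MonotoneOn.convexOn_of_deriv (convex_Ici a) hf ?_ ?_ <;> rw [interior_Ici]
  · exact fun u hu => (hderiv u hu).differentiableAt.differentiableWithinAt
  · exact hmono.congr fun u hu => ((hderiv u hu).deriv).symm

theorem arimoto_generator_convex (α : ℝ) (hα : α ∈ Set.Ioo (0:ℝ) 1 ∪ Set.Ioi 1) :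
    ConvexOn ℝ (Set.Ici (0:ℝ))
      (fun u : ℝ => α / (α - 1) * ((1 + u ^ α) ^ (1 / α) - (1 + u) - 2 ^ (1 / α) + 2)) := by
  have hα0 : 0 < α := by
    rcases hα with h | h
    · exact h.1
    · exact zero_lt_one.trans h
  have hα1 : α - 1 ≠ 0 := by
    rcases hα with h | h
    · exact (sub_neg.mpr h.2).ne
    · exact (sub_pos.mpr h).ne'
  set c := α / (α - 1)
  have hcs : c * (1 / α - 1) = -1 := by
    simp only [c]
    field_simp
    ring
  refine convexOn_Ici_of_hasDerivAt_of_monotoneOn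
    (f' := fun u => c * (1 + u ^ (-α)) ^ (1 / α - 1) - c) ?_ (fun u hu => ?_) ?_
  · have := continuousOn_one_add_rpow_rpow_inv hα0.le
    fun_prop
  · refine ((((hasDerivAt_one_add_rpow_rpow_inv hα0.ne' hu).sub
      ((hasDerivAt_id u).const_add 1)).sub_const _).add_const _).const_mul c |>.congr_deriv ?_
    ring
  · have hanti := antitoneOn_mul_rpow_of_mul_nonpos (hcs.trans_le (by norm_num))
    have hmono := hanti.comp (antitoneOn_one_add_rpow_neg hα0.le) fun u hu =>
      add_pos_of_pos_of_nonneg one_pos (rpow_nonneg (le_of_lt hu) _)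
    exact fun x hx y hy hxy => sub_le_sub_right (hmono hx hy hxy) c
end

section
/- For a, b > 0, the limit as α → 1 of (α/(α-1))·((a^α + b^α)^(1/α) − 2^(1/α − 1)·(a+b)) equals a·log(a/((a+b)/2)) + b·log(b/((a+b)/2)). -/
/-! The bracket vanishes at α = 1, so α/(α-1) times it tends to the derivative at 1 of
F(α) = (a^α + b^α)^(1/α) - 2^(1/α - 1)(a + b). Differentiating the α-norm at α = 1 gives
a log a + b log b - (a + b) log (a + b), and the second term contributes (a + b) log 2. -/

open Real Set Filter
open Topology

theorem hasDerivAt_sum_rpow_rpow_inv_one {ι : Type*} (s : Finset ι) {x : ι → ℝ}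
    (hx : ∀ i ∈ s, 0 < x i) (hs : s.Nonempty) :
    HasDerivAt (fun p : ℝ => (∑ i ∈ s, x i ^ p) ^ (1 / p))
      (∑ i ∈ s, x i * log (x i) - (∑ i ∈ s, x i) * log (∑ i ∈ s, x i)) 1 := by
  have hsum : HasDerivAt (fun p : ℝ => ∑ i ∈ s, x i ^ p) (∑ i ∈ s, x i * log (x i)) 1 :=
    HasDerivAt.fun_sum fun i hi => by
      simpa [mul_comm] using (hasDerivAt_id (1 : ℝ)).const_rpow (hx i hi)
  have hinv : HasDerivAt (fun p : ℝ => 1 / p) (-1) 1 := by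
    simpa using hasDerivAt_inv (one_ne_zero' ℝ)
  have hpos : 0 < ∑ i ∈ s, x i ^ (1 : ℝ) := by
    simpa using Finset.sum_pos hx hs
  simpa [sub_eq_add_neg] using hsum.rpow hinv hpos

theorem hasDerivAt_const_rpow_inv_sub_one {t : ℝ} (ht : 0 < t) :
    HasDerivAt (fun p : ℝ => t ^ (1 / p - 1)) (-log t) 1 := by
  have hinv : HasDerivAt (fun p : ℝ => 1 / p - 1) (-1) 1 := by
    simpa using (hasDerivAt_inv (one_ne_zero' ℝ)).sub_const 1
  simpa using hinv.const_rpow ht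

theorem tendsto_div_sub_mul_of_hasDerivAt {f : ℝ → ℝ} {f' x : ℝ} (hf : HasDerivAt f f' x)
    (hfx : f x = 0) :
    Tendsto (fun y => y / (y - x) * f y) (𝓝[≠] x) (𝓝 (x * f')) := by
  have hid : Tendsto (fun y : ℝ => y) (𝓝[≠] x) (𝓝 x) :=
    tendsto_nhdsWithin_of_tendsto_nhds tendsto_id
  refine (hid.mul hf.tendsto_slope).congr fun y => ?_
  rw [slope_def_field, hfx]
  ring

theorem arimoto_limit_alpha_one (a b : ℝ) (ha : 0 < a) (hb : 0 < b) :
    Filter.Tendsto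
      (fun α : ℝ => α / (α - 1) * ((a ^ α + b ^ α) ^ (1 / α) - 2 ^ (1 / α - 1) * (a + b)))
      (nhdsWithin 1 (Set.Ioo (0:ℝ) 1 ∪ Set.Ioi 1))
      (nhds (a * Real.log (a / ((a + b) / 2)) + b * Real.log (b / ((a + b) / 2)))) := by
  have hnorm := hasDerivAt_sum_rpow_rpow_inv_one Finset.univ (x := ![a, b])
    (by simp [Fin.forall_fin_two, ha, hb]) Finset.univ_nonempty
  simp only [Fin.sum_univ_two, Matrix.cons_val_zero, Matrix.cons_val_one] at hnorm
  have hF := hnorm.fun_sub ((hasDerivAt_const_rpow_inv_sub_one two_pos).mul_const (a + b))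
  have hlim := tendsto_div_sub_mul_of_hasDerivAt hF (by norm_num)
  have hsub : Ioo (0 : ℝ) 1 ∪ Ioi 1 ⊆ {1}ᶜ := by
    rintro x (hx | hx)
    exacts [hx.2.ne, hx.ne']
  convert hlim.mono_left (nhdsWithin_mono _ hsub) using 2
  have hm : (a + b) / 2 ≠ 0 := by positivity
  rw [log_div ha.ne' hm, log_div hb.ne' hm, log_div (by positivity) two_ne_zero]
  ring
end

section
/- For η ∈ [0,1] and α ∈ (0,1) ∪ (1,∞), the infimum over t ∈ ℝ of η·ℓ̃_α(t) + (1−η)·ℓ̃_α(−t) equals (α/(α-1))·(1 − (η^α + (1−η)^α)^(1/α)), where ℓ̃_α(t) = (α/(α-1))·(1 − σ(t)^((α-1)/α)) and σ(t) = 1/(1+e^(−t)) is the sigmoid. -/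
open Real Filter Topology Set

/-!
With `s = σ(t)`, so that `σ(-t) = 1 - s`, and `p = (α - 1) / α`, the risk is
`p⁻¹ * (1 - (η * s ^ p + (1 - η) * (1 - s) ^ p))`. For `p ≤ 1`, `p ≠ 0` the map `x ↦ x ^ p / p`
is concave, so it lies below its tangent lines. Take the tangents at `u = η^α / (η^α + (1-η)^α)`
and at `1 - u`: the weighted slopes `η * u ^ (p - 1)` and `(1 - η) * (1 - u) ^ (p - 1)` both equal
`M = (η^α + (1-η)^α)^(1/α)`, so the two tangent bounds add up to
`(η * s ^ p + (1 - η) * (1 - s) ^ p) / p ≤ M / p` for every `s`, with equality at `s = u`.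
For `η ∈ {0, 1}` the infimum `0` is only approached as `t → ∓∞`.
-/

lemma one_add_mul_sub_one_le_rpow_of_nonpos {p y : ℝ} (hp : p ≤ 0) (hy : 0 < y) :
    1 + p * (y - 1) ≤ y ^ p :=
  calc 1 + p * (y - 1) ≤ 1 + p * log y := by
        gcongr 1 + ?_; exact mul_le_mul_of_nonpos_left (log_le_sub_one_of_pos hy) hp
    _ ≤ exp (p * log y) := by linarith [add_one_le_exp (p * log y)]
    _ = y ^ p := by rw [rpow_def_of_pos hy, mul_comm]

lemma inv_mul_rpow_le_inv_add_sub_one {p y : ℝ} (hp0 : p ≠ 0) (hp1 : p ≤ 1) (hy : 0 < y) :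
    p⁻¹ * y ^ p ≤ p⁻¹ + (y - 1) := by
  have hdiff : p⁻¹ * (y ^ p - (1 + p * (y - 1))) ≤ 0 := by
    rcases hp0.lt_or_gt with hneg | hpos
    · exact mul_nonpos_of_nonpos_of_nonneg (inv_lt_zero.2 hneg).le
        (sub_nonneg.2 (one_add_mul_sub_one_le_rpow_of_nonpos hneg.le hy))
    · have h := rpow_one_add_le_one_add_mul_self (s := y - 1) (by linarith) hpos.le hp1
      rw [add_sub_cancel] at h
      exact mul_nonpos_of_nonneg_of_nonpos (inv_nonneg.2 hpos.le) (sub_nonpos.2 h)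
  have hexpand : p⁻¹ * (y ^ p - (1 + p * (y - 1))) = p⁻¹ * y ^ p - (p⁻¹ + (y - 1)) := by
    field_simp
  linarith

lemma inv_mul_rpow_le {p u x : ℝ} (hp0 : p ≠ 0) (hp1 : p ≤ 1) (hu : 0 < u) (hx : 0 < x) :
    p⁻¹ * x ^ p ≤ u ^ (p - 1) * (p⁻¹ * u + (x - u)) := by
  have h := mul_le_mul_of_nonneg_left (inv_mul_rpow_le_inv_add_sub_one hp0 hp1 (div_pos hx hu))
    (rpow_pos_of_pos hu p).le
  rw [div_rpow hx.le hu.le] at h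
  rw [rpow_sub_one hu.ne']
  have hup : u ^ p ≠ 0 := (rpow_pos_of_pos hu p).ne'
  calc p⁻¹ * x ^ p = u ^ p * (p⁻¹ * (x ^ p / u ^ p)) := by field_simp
    _ ≤ u ^ p * (p⁻¹ + (x / u - 1)) := h
    _ = u ^ p / u * (p⁻¹ * u + (x - u)) := by field_simp

lemma ciInf_eq_of_forall_le_of_tendsto {ι : Type*} {f : ι → ℝ} {a : ℝ} {l : Filter ι} [l.NeBot]
    (hle : ∀ i, a ≤ f i) (hf : Tendsto f l (𝓝 a)) : ⨅ i, f i = a := by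
  have := l.nonempty_of_neBot
  exact le_antisymm (ge_of_tendsto' hf fun i => ciInf_le ⟨a, forall_mem_range.2 hle⟩ i)
    (le_ciInf hle)

lemma one_div_one_add_exp (t : ℝ) : 1 / (1 + exp t) = 1 - 1 / (1 + exp (-t)) := by
  rw [exp_neg]; field_simp; ring

lemma one_div_one_add_exp_mem_Ioo (t : ℝ) : 1 / (1 + exp t) ∈ Ioo (0 : ℝ) 1 :=
  ⟨by positivity, (div_lt_one (by positivity)).2 (by linarith [exp_pos t])⟩

lemma one_div_one_add_exp_neg_log_div {u : ℝ} (hu : u ∈ Ioo (0 : ℝ) 1) :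
    1 / (1 + exp (-log (u / (1 - u)))) = u := by
  have hu₀ := hu.1.ne'
  rw [exp_neg, exp_log (div_pos hu.1 (sub_pos.2 hu.2)), inv_div]
  field_simp
  ring

lemma tendsto_one_div_one_add_exp_atBot : Tendsto (fun t => 1 / (1 + exp t)) atBot (𝓝 1) := by
  simpa using (tendsto_exp_atBot.const_add 1).inv₀ (by norm_num)

-- the minimising value of `σ(t)`: the `α`-tilted version of the distribution `(w, 1 - w)`
noncomputable def tilt (α w : ℝ) : ℝ := w ^ α / (w ^ α + (1 - w) ^ α)

section Tilt

variable {α w : ℝ}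

lemma rpow_add_one_sub_rpow_pos (hw : w ∈ Ioo (0 : ℝ) 1) : 0 < w ^ α + (1 - w) ^ α := by
  have := sub_pos.2 hw.2
  have := hw.1
  positivity

lemma tilt_mem_Ioo (hw : w ∈ Ioo (0 : ℝ) 1) : tilt α w ∈ Ioo (0 : ℝ) 1 := by
  have hS := rpow_add_one_sub_rpow_pos (α := α) hw
  have hB : 0 < (1 - w) ^ α := rpow_pos_of_pos (sub_pos.2 hw.2) α
  exact ⟨div_pos (rpow_pos_of_pos hw.1 α) hS, (div_lt_one hS).2 (by linarith)⟩

lemma one_sub_tilt (hw : w ∈ Ioo (0 : ℝ) 1) :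
    1 - tilt α w = (1 - w) ^ α / (w ^ α + (1 - w) ^ α) := by
  have := (rpow_add_one_sub_rpow_pos (α := α) hw).ne'
  unfold tilt
  field_simp
  ring

lemma mul_div_rpow_sub_one {S : ℝ} (hα : 0 < α) (hw : 0 < w) (hS : 0 < S) :
    w * (w ^ α / S) ^ ((α - 1) / α - 1) = S ^ (1 / α) := by
  have hexp : (α - 1) / α - 1 = -(1 / α) := by field_simp; ring
  have hw' : (w ^ α) ^ (1 / α) = w := by
    rw [← rpow_mul hw.le, mul_one_div_cancel hα.ne', rpow_one]
  have := (rpow_pos_of_pos hS (1 / α)).ne'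
  rw [hexp, rpow_neg (div_pos (rpow_pos_of_pos hw α) hS).le,
    div_rpow (rpow_pos_of_pos hw α).le hS.le, hw']
  field_simp

lemma mul_tilt_rpow_sub_one (hα : 0 < α) (hw : w ∈ Ioo (0 : ℝ) 1) :
    w * tilt α w ^ ((α - 1) / α - 1) = (w ^ α + (1 - w) ^ α) ^ (1 / α) :=
  mul_div_rpow_sub_one hα hw.1 (rpow_add_one_sub_rpow_pos hw)

lemma mul_one_sub_tilt_rpow_sub_one (hα : 0 < α) (hw : w ∈ Ioo (0 : ℝ) 1) :
    (1 - w) * (1 - tilt α w) ^ ((α - 1) / α - 1) = (w ^ α + (1 - w) ^ α) ^ (1 / α) := by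
  rw [one_sub_tilt hw]
  exact mul_div_rpow_sub_one hα (sub_pos.2 hw.2) (rpow_add_one_sub_rpow_pos hw)

lemma inv_mul_weighted_rpow_le (hα : 0 < α) (hα1 : α ≠ 1) (hw : w ∈ Icc (0 : ℝ) 1) {s : ℝ}
    (hs : s ∈ Ioo (0 : ℝ) 1) :
    ((α - 1) / α)⁻¹ * (w * s ^ ((α - 1) / α) + (1 - w) * (1 - s) ^ ((α - 1) / α)) ≤
      ((α - 1) / α)⁻¹ * (w ^ α + (1 - w) ^ α) ^ (1 / α) := by
  have hp0 : (α - 1) / α ≠ 0 := div_ne_zero (sub_ne_zero.2 hα1) hα.ne'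
  have hp1 : (α - 1) / α ≤ 1 := (div_le_one hα).2 (by linarith)
  have hs1 : 0 < 1 - s := sub_pos.2 hs.2
  obtain rfl | hw0 := hw.1.eq_or_lt
  · have h := inv_mul_rpow_le hp0 hp1 one_pos hs1
    simp only [one_rpow, zero_rpow hα.ne', sub_zero, zero_mul, one_mul, zero_add] at h ⊢
    linarith [hs.1]
  obtain rfl | hw1 := hw.2.eq_or_lt
  · have h := inv_mul_rpow_le hp0 hp1 one_pos hs.1
    simp only [one_rpow, zero_rpow hα.ne', sub_self, zero_mul, one_mul, add_zero] at h ⊢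
    linarith
  have hw' : w ∈ Ioo (0 : ℝ) 1 := ⟨hw0, hw1⟩
  have hu := tilt_mem_Ioo (α := α) hw'
  have h₁ := inv_mul_rpow_le hp0 hp1 hu.1 hs.1
  have h₂ := inv_mul_rpow_le hp0 hp1 (sub_pos.2 hu.2) hs1
  have k₁ := mul_tilt_rpow_sub_one hα hw'
  have k₂ := mul_one_sub_tilt_rpow_sub_one hα hw'
  linear_combination w * h₁ + (1 - w) * h₂
    + (((α - 1) / α)⁻¹ * tilt α w + (s - tilt α w)) * k₁
    + (((α - 1) / α)⁻¹ * (1 - tilt α w) + (1 - s - (1 - tilt α w))) * k₂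

lemma weighted_tilt_rpow_eq (hα : 0 < α) (hw : w ∈ Ioo (0 : ℝ) 1) :
    w * tilt α w ^ ((α - 1) / α) + (1 - w) * (1 - tilt α w) ^ ((α - 1) / α) =
      (w ^ α + (1 - w) ^ α) ^ (1 / α) := by
  have hu := tilt_mem_Ioo (α := α) hw
  have k₁ := mul_tilt_rpow_sub_one hα hw
  have k₂ := mul_one_sub_tilt_rpow_sub_one hα hw
  rw [rpow_sub_one hu.1.ne'] at k₁
  rw [rpow_sub_one (sub_pos.2 hu.2).ne'] at k₂
  have := hu.1.ne'
  have := (sub_pos.2 hu.2).ne'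
  field_simp at k₁ k₂
  linear_combination k₁ + k₂

end Tilt

-- `alphaLoss α x` is the `α`-loss of assigning probability `x` to the true label, so that the
-- margin loss is `ℓ̃_α(t) = alphaLoss α (σ t)`, with `σ t = 1 / (1 + exp (-t))`.
noncomputable def alphaLoss (α x : ℝ) : ℝ := α / (α - 1) * (1 - x ^ ((α - 1) / α))

noncomputable def conditionalRisk (α η t : ℝ) : ℝ :=
  η * alphaLoss α (1 / (1 + exp (-t))) + (1 - η) * alphaLoss α (1 / (1 + exp t))

section ConditionalRisk

variable {α η : ℝ}

lemma tendsto_alphaLoss_of_tendsto_one {ι : Type*} {l : Filter ι} {f : ι → ℝ}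
    (hf : Tendsto f l (𝓝 1)) : Tendsto (fun i => alphaLoss α (f i)) l (𝓝 0) := by
  simpa [alphaLoss] using ((tendsto_const_nhds (x := (1 : ℝ))).sub
    (hf.rpow_const (p := (α - 1) / α) (Or.inl one_ne_zero))).const_mul (α / (α - 1))

lemma le_conditionalRisk (hα : 0 < α) (hα1 : α ≠ 1) (hη : η ∈ Icc (0 : ℝ) 1) (t : ℝ) :
    α / (α - 1) * (1 - (η ^ α + (1 - η) ^ α) ^ (1 / α)) ≤ conditionalRisk α η t := by
  rw [conditionalRisk, alphaLoss, alphaLoss, one_div_one_add_exp t, ← inv_div]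
  linear_combination inv_mul_weighted_rpow_le hα hα1 hη (one_div_one_add_exp_mem_Ioo (-t))

lemma conditionalRisk_log_tilt (hα : 0 < α) (hη : η ∈ Ioo (0 : ℝ) 1) :
    conditionalRisk α η (log (tilt α η / (1 - tilt α η))) =
      α / (α - 1) * (1 - (η ^ α + (1 - η) ^ α) ^ (1 / α)) := by
  have hu := tilt_mem_Ioo (α := α) hη
  rw [conditionalRisk, alphaLoss, alphaLoss, one_div_one_add_exp_neg_log_div hu,
    one_div_one_add_exp, one_div_one_add_exp_neg_log_div hu]
  linear_combination (-(α / (α - 1))) * weighted_tilt_rpow_eq hα hη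

lemma tendsto_conditionalRisk_zero_atBot : Tendsto (conditionalRisk α 0) atBot (𝓝 0) := by
  refine (tendsto_alphaLoss_of_tendsto_one (α := α) tendsto_one_div_one_add_exp_atBot).congr
    fun t => ?_
  simp [conditionalRisk]

lemma tendsto_conditionalRisk_one_atTop : Tendsto (conditionalRisk α 1) atTop (𝓝 0) := by
  refine (tendsto_alphaLoss_of_tendsto_one (α := α)
    (tendsto_one_div_one_add_exp_atBot.comp tendsto_neg_atTop_atBot)).congr fun t => ?_
  simp [conditionalRisk]

end ConditionalRisk

theorem margin_alpha_loss_inf (α η : ℝ) (hα : α ∈ Set.Ioo (0:ℝ) 1 ∪ Set.Ioi 1)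
    (hη : η ∈ Set.Icc (0:ℝ) 1) :
    (⨅ t : ℝ,
        (η * (α / (α - 1) * (1 - (1 / (1 + Real.exp (-t))) ^ ((α - 1) / α))) +
          (1 - η) * (α / (α - 1) * (1 - (1 / (1 + Real.exp t)) ^ ((α - 1) / α))))) =
      α / (α - 1) * (1 - (η ^ α + (1 - η) ^ α) ^ (1 / α)) := by
  show ⨅ t, conditionalRisk α η t = _
  have hα0 : 0 < α := by rcases hα with h | h; exacts [h.1, one_pos.trans h]
  have hα1 : α ≠ 1 := by rcases hα with h | h; exacts [h.2.ne, h.ne']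
  have hle := le_conditionalRisk hα0 hα1 hη
  obtain rfl | hη0 := hη.1.eq_or_lt
  · refine ciInf_eq_of_forall_le_of_tendsto (l := atBot) hle ?_
    simpa [zero_rpow hα0.ne'] using tendsto_conditionalRisk_zero_atBot
  obtain rfl | hη1 := hη.2.eq_or_lt
  · refine ciInf_eq_of_forall_le_of_tendsto (l := atTop) hle ?_
    simpa [zero_rpow hα0.ne'] using tendsto_conditionalRisk_one_atTop
  refine ciInf_eq_of_forall_le_of_tendsto (l := pure (log (tilt α η / (1 - tilt α η)))) hle ?_
  rw [← conditionalRisk_log_tilt hα0 ⟨hη0, hη1⟩]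
  exact tendsto_pure_nhds _ _
end

section
/- For u ≥ 0 and α ∈ (0,1) ∪ (1,∞), −inf_t (u·ℓ̃_α(t) + ℓ̃_α(−t)) = (α/(α-1))·((u^α + 1)^(1/α) − (1+u)), where ℓ̃_α(t) = (α/(α-1))·(1 − σ(t)^((α-1)/α)) with σ the sigmoid; equivalently, f_α(u) = −inf_t(u·ℓ̃_α(t) + ℓ̃_α(−t)) − (α/(α-1))·(2^(1/α) − 2). -/
/-!
Put `β = (α - 1) / α` and `s = σ t`, so that `σ (-t) = 1 - s`. The infimand is then
`α/(α-1) (u + 1) - α/(α-1) (u s^β + (1 - s)^β)`, and by Hölder's inequality with exponents `α` and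
`α/(α-1)`, reversed for `α < 1` (exactly when `α/(α-1)` is negative),
`α/(α-1) (u s^β + (1 - s)^β) ≤ α/(α-1) (u^α + 1)^(1/α)`, with equality at `s = u^α/(u^α + 1)`,
i.e. `t = log u^α`. When `u = 0` the bound is only approached, as `t → -∞`.
Hölder itself comes from weighted AM-GM after normalising `(u^α, 1)` to a probability vector.
-/

open Real Set Filter Topology

section WeightedMean

variable {p : ℝ}

lemma add_le_rpow_mul_rpow_of_one_lt {x y : ℝ} (hp : 1 < p) (hx : 0 ≤ x) (hy : 0 < y) :
    p * x + (1 - p) * y ≤ x ^ p * y ^ (1 - p) := by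
  have hbernoulli : 1 + p * (x / y - 1) ≤ (x / y) ^ p := by
    simpa using one_add_mul_self_le_rpow_one_add (s := x / y - 1)
      (by linarith [div_nonneg hx hy.le]) hp.le
  calc p * x + (1 - p) * y = (1 + p * (x / y - 1)) * y := by field_simp; ring
    _ ≤ (x / y) ^ p * y := by gcongr
    _ = x ^ p * y ^ (1 - p) := by
      rw [div_rpow hx hy.le, rpow_sub hy, rpow_one]; field_simp

/-- Weighted AM-GM for `p < 1` and its reverse for `p > 1`, unified by the sign of `(1 - p)⁻¹`. -/
lemma inv_one_sub_mul_rpow_mul_rpow_le {x y : ℝ} (hp0 : 0 < p) (hp1 : p ≠ 1) (hx : 0 ≤ x)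
    (hy : 0 < y) : (1 - p)⁻¹ * (x ^ p * y ^ (1 - p)) ≤ (1 - p)⁻¹ * (p * x + (1 - p) * y) := by
  rcases hp1.lt_or_gt with hp1 | hp1
  · exact mul_le_mul_of_nonneg_left
      (geom_mean_le_arith_mean2_weighted hp0.le (by linarith) hx hy.le (by ring))
      (inv_nonneg.2 (by linarith))
  · exact mul_le_mul_of_nonpos_left (add_le_rpow_mul_rpow_of_one_lt hp1 hx hy)
      (inv_nonpos.2 (by linarith))

lemma inv_one_sub_mul_rpow_mul_rpow_add_le {a b s : ℝ} (hp0 : 0 < p) (hp1 : p ≠ 1)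
    (ha : 0 ≤ a) (hb : 0 ≤ b) (hab : a + b = 1) (hs0 : 0 < s) (hs1 : s < 1) :
    (1 - p)⁻¹ * (a ^ p * s ^ (1 - p) + b ^ p * (1 - s) ^ (1 - p)) ≤ (1 - p)⁻¹ := by
  have h := add_le_add (inv_one_sub_mul_rpow_mul_rpow_le hp0 hp1 ha hs0)
    (inv_one_sub_mul_rpow_mul_rpow_le hp0 hp1 hb (sub_pos.2 hs1))
  have hweights : p * a + (1 - p) * s + (p * b + (1 - p) * (1 - s)) = 1 := by
    linear_combination p * hab
  rwa [← mul_add, ← mul_add, hweights, mul_one] at h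

end WeightedMean

lemma rpow_one_div_mul_div_rpow_one_div {α w S : ℝ} (hα : α ≠ 0) (hw : 0 ≤ w) (hS : 0 < S) :
    S ^ (1 / α) * (w ^ α / S) ^ (1 / α) = w := by
  rw [← mul_rpow hS.le (by positivity), mul_div_cancel₀ _ hS.ne', ← rpow_mul hw,
    mul_one_div_cancel hα, rpow_one]

section Holder

variable {α u v : ℝ}

lemma div_sub_one_eq_inv_one_sub (hα : α ≠ 0) : α / (α - 1) = (1 - 1 / α)⁻¹ := by
  field_simp

lemma div_sub_one_div_eq_one_sub_one_div (hα : α ≠ 0) : (α - 1) / α = 1 - 1 / α := by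
  field_simp

lemma mul_rpow_add_mul_rpow_eq_rpow_mul (hα : α ≠ 0) (hu : 0 ≤ u) (hv : 0 < v) (y z : ℝ) :
    u * y ^ (1 - 1 / α) + v * z ^ (1 - 1 / α) = (u ^ α + v ^ α) ^ (1 / α) *
      ((u ^ α / (u ^ α + v ^ α)) ^ (1 / α) * y ^ (1 - 1 / α) +
        (v ^ α / (u ^ α + v ^ α)) ^ (1 / α) * z ^ (1 - 1 / α)) := by
  have hS : 0 < u ^ α + v ^ α := by positivity
  rw [mul_add, ← mul_assoc, ← mul_assoc, rpow_one_div_mul_div_rpow_one_div hα hu hS,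
    rpow_one_div_mul_div_rpow_one_div hα hv.le hS]

lemma div_mul_mul_rpow_add_mul_rpow_le (hα0 : 0 < α) (hα1 : α ≠ 1) (hu : 0 ≤ u) (hv : 0 < v)
    {s : ℝ} (hs0 : 0 < s) (hs1 : s < 1) :
    α / (α - 1) * (u * s ^ ((α - 1) / α) + v * (1 - s) ^ ((α - 1) / α)) ≤
      α / (α - 1) * (u ^ α + v ^ α) ^ (1 / α) := by
  have hS : 0 < u ^ α + v ^ α := by positivity
  have hp1 : 1 / α ≠ 1 := by rwa [ne_eq, div_eq_one_iff_eq hα0.ne', eq_comm]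
  have hsum := inv_one_sub_mul_rpow_mul_rpow_add_le (one_div_pos.2 hα0) hp1
    (div_nonneg (rpow_nonneg hu α) hS.le) (div_nonneg (rpow_nonneg hv.le α) hS.le)
    (by rw [← add_div, div_self hS.ne']) hs0 hs1
  rw [div_sub_one_eq_inv_one_sub hα0.ne', div_sub_one_div_eq_one_sub_one_div hα0.ne',
    mul_rpow_add_mul_rpow_eq_rpow_mul hα0.ne' hu hv, mul_left_comm]
  exact (mul_le_mul_of_nonneg_left hsum (rpow_nonneg hS.le _)).trans_eq (mul_comm _ _)

lemma mul_div_rpow_add_mul_div_rpow_eq (hα : α ≠ 0) (hu : 0 ≤ u) (hv : 0 < v) :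
    u * (u ^ α / (u ^ α + v ^ α)) ^ ((α - 1) / α) +
      v * (v ^ α / (u ^ α + v ^ α)) ^ ((α - 1) / α) = (u ^ α + v ^ α) ^ (1 / α) := by
  have hS : 0 < u ^ α + v ^ α := by positivity
  have hself {w : ℝ} (hw : 0 ≤ w) : w ^ (1 / α) * w ^ (1 - 1 / α) = w := by
    rw [← rpow_add' hw (by simp), add_sub_cancel, rpow_one]
  rw [div_sub_one_div_eq_one_sub_one_div hα, mul_rpow_add_mul_rpow_eq_rpow_mul hα hu hv,
    hself (by positivity), hself (by positivity), ← add_div, div_self hS.ne', mul_one]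

end Holder

lemma sigmoid_log {x : ℝ} (hx : 0 < x) : sigmoid (log x) = x / (x + 1) := by
  rw [sigmoid_def, exp_neg, exp_log hx]
  field_simp

/-- The margin-based α-loss `ℓ̃_α`. -/
noncomputable def marginAlphaLoss (α t : ℝ) : ℝ := α / (α - 1) * (1 - sigmoid t ^ ((α - 1) / α))

section MarginAlphaLoss

variable {α u : ℝ}

lemma mul_marginAlphaLoss_add_marginAlphaLoss_neg (α u t : ℝ) :
    u * marginAlphaLoss α t + marginAlphaLoss α (-t) = α / (α - 1) * (u + 1) -
      α / (α - 1) * (u * sigmoid t ^ ((α - 1) / α) + (1 - sigmoid t) ^ ((α - 1) / α)) := by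
  rw [marginAlphaLoss, marginAlphaLoss, sigmoid_neg]
  ring

theorem iInf_mul_marginAlphaLoss_add_marginAlphaLoss_neg (hα0 : 0 < α) (hα1 : α ≠ 1)
    (hu : 0 ≤ u) : ⨅ t, (u * marginAlphaLoss α t + marginAlphaLoss α (-t)) =
      α / (α - 1) * (u + 1) - α / (α - 1) * (u ^ α + 1) ^ (1 / α) := by
  have hle (t : ℝ) : α / (α - 1) * (u + 1) - α / (α - 1) * (u ^ α + 1) ^ (1 / α) ≤
      u * marginAlphaLoss α t + marginAlphaLoss α (-t) := by
    rw [mul_marginAlphaLoss_add_marginAlphaLoss_neg]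
    have := div_mul_mul_rpow_add_mul_rpow_le hα0 hα1 hu one_pos (sigmoid_pos t)
      (sigmoid_lt_one t)
    rw [one_rpow, one_mul] at this
    linarith
  have hbdd : BddBelow (range fun t => u * marginAlphaLoss α t + marginAlphaLoss α (-t)) :=
    ⟨_, forall_mem_range.2 hle⟩
  refine le_antisymm ?_ (le_ciInf hle)
  rcases hu.eq_or_lt with rfl | hu0
  · have hlim : Tendsto (fun t => 0 * marginAlphaLoss α t + marginAlphaLoss α (-t)) atBot
        (𝓝 (α / (α - 1) * (1 - 1 ^ ((α - 1) / α)))) := by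
      have hsig : Tendsto (fun t => sigmoid (-t)) atBot (𝓝 1) :=
        tendsto_sigmoid_atTop.comp tendsto_neg_atBot_atTop
      simpa only [zero_mul, zero_add, marginAlphaLoss] using
        ((hsig.rpow_const (Or.inl one_ne_zero)).const_sub 1).const_mul (α / (α - 1))
    simpa [zero_rpow hα0.ne'] using ge_of_tendsto' hlim fun t => ciInf_le hbdd t
  · refine (ciInf_le hbdd (log (u ^ α))).trans_eq ?_
    have hS : 0 < u ^ α + 1 := by positivity
    have hattain := mul_div_rpow_add_mul_div_rpow_eq hα0.ne' hu0.le one_pos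
    rw [one_rpow, one_mul] at hattain
    rw [mul_marginAlphaLoss_add_marginAlphaLoss_neg, sigmoid_log (by positivity),
      one_sub_div hS.ne', add_sub_cancel_left, hattain]

end MarginAlphaLoss

theorem arimoto_from_margin_loss (α u : ℝ) (hα : α ∈ Set.Ioo (0:ℝ) 1 ∪ Set.Ioi 1)
    (hu : 0 ≤ u) :
    (-(⨅ t : ℝ,
        (u * (α / (α - 1) * (1 - (1 / (1 + Real.exp (-t))) ^ ((α - 1) / α))) +
          α / (α - 1) * (1 - (1 / (1 + Real.exp t)) ^ ((α - 1) / α)))) =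
      α / (α - 1) * ((u ^ α + 1) ^ (1 / α) - (1 + u))) ∧
    α / (α - 1) * ((1 + u ^ α) ^ (1 / α) - (1 + u) - 2 ^ (1 / α) + 2) =
      -(⨅ t : ℝ,
        (u * (α / (α - 1) * (1 - (1 / (1 + Real.exp (-t))) ^ ((α - 1) / α))) +
          α / (α - 1) * (1 - (1 / (1 + Real.exp t)) ^ ((α - 1) / α)))) -
        α / (α - 1) * (2 ^ (1 / α) - 2) := by
  obtain ⟨hα0, hα1⟩ : 0 < α ∧ α ≠ 1 := by
    rcases hα with h | h
    exacts [⟨h.1, h.2.ne⟩, ⟨one_pos.trans h, h.ne'⟩]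
  have hinf := iInf_mul_marginAlphaLoss_add_marginAlphaLoss_neg hα0 hα1 hu
  simp only [marginAlphaLoss, sigmoid_def, neg_neg, inv_eq_one_div] at hinf
  rw [hinf, add_comm 1 (u ^ α)]
  constructor <;> ring
end

section
/- For α ∈ (0,1) ∪ (1,∞), the function ψ_α : [0,1] → ℝ defined by ψ_α(p) = (α/(α-1))·(((1+p)^α + (1−p)^α)^(1/α) − 2^(1/α)) is convex and strictly monotone increasing, with ψ_α(0) = 0 and ψ_α(1) = (α/(α-1))·(2 − 2^(1/α)). -/
/-!
Write `a = 1 + p`, `b = 1 - p` and `g = a ^ α + b ^ α`, so that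
`ψ_α = α / (α - 1) * (g ^ (1 / α) - 2 ^ (1 / α))`. Then
`ψ_α' = α g ^ (1 / α - 1) (a ^ (α - 1) - b ^ (α - 1)) / (α - 1)`, which is positive for `0 < p < 1`
because `t ↦ t ^ (α - 1)` increases or decreases according to the sign of `α - 1`; and the second
derivative collapses to `ψ_α'' = 4 α g ^ (1 / α - 2) (a b) ^ (α - 2) > 0`, so `ψ_α` is even convex
on `[-1, 1]`.
-/

open Real Set

noncomputable def powSum (s p : ℝ) : ℝ := (1 + p) ^ s + (1 - p) ^ s

noncomputable def powDiff (s p : ℝ) : ℝ := (1 + p) ^ s - (1 - p) ^ s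

noncomputable def psi (α p : ℝ) : ℝ := α / (α - 1) * (powSum α p ^ (1 / α) - 2 ^ (1 / α))

noncomputable def psiDeriv (α p : ℝ) : ℝ :=
  α * powSum α p ^ (1 / α - 1) * (powDiff (α - 1) p / (α - 1))

noncomputable def psiDeriv2 (α p : ℝ) : ℝ :=
  4 * α * powSum α p ^ (1 / α - 2) * ((1 + p) * (1 - p)) ^ (α - 2)

lemma rpow_sub_rpow_div_pos {a b s : ℝ} (hb : 0 < b) (hba : b < a) (hs : s ≠ 0) :
    0 < (a ^ s - b ^ s) / s := by
  rcases hs.lt_or_gt with hs | hs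
  · exact div_pos_of_neg_of_neg (sub_neg.2 (rpow_lt_rpow_of_neg hb hba hs)) hs
  · exact div_pos (sub_pos.2 (rpow_lt_rpow hb.le hba hs)) hs

section
variable {x : ℝ} (s : ℝ)

lemma powSum_pos (hx : x ∈ Ioo (-1) 1) : 0 < powSum s x := by
  have ha : 0 < 1 + x := by linarith [hx.1]
  have hb : 0 < 1 - x := by linarith [hx.2]
  unfold powSum; positivity

lemma hasDerivAt_powSum (hx : x ∈ Ioo (-1) 1) :
    HasDerivAt (powSum s) (s * powDiff (s - 1) x) x := by
  have ha : 1 + x ≠ 0 := by linarith [hx.1]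
  have hb : 1 - x ≠ 0 := by linarith [hx.2]
  refine ((((hasDerivAt_id x).const_add 1).rpow_const (p := s) (.inl ha)).add
    (((hasDerivAt_id x).const_sub 1).rpow_const (p := s) (.inl hb))).congr_deriv ?_
  simp only [id, powDiff]; ring

lemma hasDerivAt_powDiff (hx : x ∈ Ioo (-1) 1) :
    HasDerivAt (powDiff s) (s * powSum (s - 1) x) x := by
  have ha : 1 + x ≠ 0 := by linarith [hx.1]
  have hb : 1 - x ≠ 0 := by linarith [hx.2]
  refine ((((hasDerivAt_id x).const_add 1).rpow_const (p := s) (.inl ha)).sub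
    (((hasDerivAt_id x).const_sub 1).rpow_const (p := s) (.inl hb))).congr_deriv ?_
  simp only [id, powSum]; ring

lemma powSum_mul_powSum_sub_powDiff_sq (hx : x ∈ Ioo (-1) 1) :
    powSum s x * powSum (s - 2) x - powDiff (s - 1) x ^ 2 = 4 * ((1 + x) * (1 - x)) ^ (s - 2) := by
  have ha : 0 < 1 + x := by linarith [hx.1]
  have hb : 0 < 1 - x := by linarith [hx.2]
  have hpow : ∀ {c : ℝ}, 0 < c → c ^ s = c ^ (s - 2) * c * c := fun hc => by
    rw [← rpow_add_one hc.ne', ← rpow_add_one hc.ne']; ring_nf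
  have hpow_sub_one : ∀ {c : ℝ}, 0 < c → c ^ (s - 1) = c ^ (s - 2) * c := fun hc => by
    rw [← rpow_add_one hc.ne']; ring_nf
  -- with a = 1 + x, b = 1 - x, u = a ^ (s - 2), v = b ^ (s - 2) the claim reads
  -- (u a² + v b²)(u + v) - (u a - v b)² = 4 u v, which holds because a + b = 2
  rw [powSum, powSum, powDiff, mul_rpow ha.le hb.le, hpow ha, hpow hb, hpow_sub_one ha,
    hpow_sub_one hb]
  ring

end

section
variable {α x : ℝ}

lemma hasDerivAt_psi (hα : α ≠ 0) (hx : x ∈ Ioo (-1) 1) :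
    HasDerivAt (psi α) (psiDeriv α x) x := by
  have hg := powSum_pos α hx
  refine ((((hasDerivAt_powSum α hx).rpow_const (p := 1 / α) (.inl hg.ne')).sub_const
    (2 ^ (1 / α))).const_mul (α / (α - 1))).congr_deriv ?_
  unfold psiDeriv
  field_simp

lemma hasDerivAt_psiDeriv (hα : α ≠ 0) (hα1 : α ≠ 1) (hx : x ∈ Ioo (-1) 1) :
    HasDerivAt (psiDeriv α) (psiDeriv2 α x) x := by
  have hg := powSum_pos α hx
  refine ((((hasDerivAt_powSum α hx).rpow_const (p := 1 / α - 1) (.inl hg.ne')).const_mul α).mul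
    ((hasDerivAt_powDiff (α - 1) hx).div_const (α - 1))).congr_deriv ?_
  have hG : powSum α x ^ (1 / α - 1) = powSum α x ^ (1 / α - 2) * powSum α x := by
    rw [← rpow_add_one hg.ne']; ring_nf
  have key := powSum_mul_powSum_sub_powDiff_sq α hx
  rw [show α - 1 - 1 = α - 2 by ring, show 1 / α - 1 - 1 = 1 / α - 2 by ring, hG, psiDeriv2]
  have : α - 1 ≠ 0 := sub_ne_zero.2 hα1
  field_simp
  linear_combination (α - 1) * key

end

lemma continuous_psi {α : ℝ} (hα : 0 < α) : Continuous (psi α) := by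
  unfold psi powSum
  fun_prop (disch := positivity)

lemma psiDeriv_pos {α x : ℝ} (hα : 0 < α) (hα1 : α ≠ 1) (hx : x ∈ Ioo 0 1) :
    0 < psiDeriv α x :=
  mul_pos (mul_pos hα (rpow_pos_of_pos (powSum_pos α ⟨by linarith [hx.1], hx.2⟩) _))
    (rpow_sub_rpow_div_pos (by linarith [hx.2]) (by linarith [hx.1]) (sub_ne_zero.2 hα1))

lemma psiDeriv2_pos {α x : ℝ} (hα : 0 < α) (hx : x ∈ Ioo (-1) 1) : 0 < psiDeriv2 α x := by
  have ha : 0 < 1 + x := by linarith [hx.1]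
  have hb : 0 < 1 - x := by linarith [hx.2]
  exact mul_pos (mul_pos (by positivity) (rpow_pos_of_pos (powSum_pos α hx) _))
    (rpow_pos_of_pos (mul_pos ha hb) _)

lemma convexOn_psi {α : ℝ} (hα : 0 < α) (hα1 : α ≠ 1) :
    ConvexOn ℝ (Icc (-1) 1) (psi α) := by
  refine convexOn_of_hasDerivWithinAt2_nonneg (convex_Icc _ _) (continuous_psi hα).continuousOn
    (f' := psiDeriv α) (f'' := psiDeriv2 α) ?_ ?_ ?_ <;> rw [interior_Icc] <;> intro x hx
  · exact (hasDerivAt_psi hα.ne' hx).hasDerivWithinAt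
  · exact (hasDerivAt_psiDeriv hα.ne' hα1 hx).hasDerivWithinAt
  · exact (psiDeriv2_pos hα hx).le

lemma strictMonoOn_psi {α : ℝ} (hα : 0 < α) (hα1 : α ≠ 1) :
    StrictMonoOn (psi α) (Icc 0 1) := by
  refine strictMonoOn_of_hasDerivWithinAt_pos (convex_Icc _ _) (continuous_psi hα).continuousOn
    (f' := psiDeriv α) ?_ ?_ <;> rw [interior_Icc] <;> intro x hx
  · exact (hasDerivAt_psi hα.ne' ⟨by linarith [hx.1], hx.2⟩).hasDerivWithinAt
  · exact psiDeriv_pos hα hα1 hx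

lemma psi_zero (α : ℝ) : psi α 0 = 0 := by
  norm_num [psi, powSum]

lemma psi_one {α : ℝ} (hα : α ≠ 0) : psi α 1 = α / (α - 1) * (2 - 2 ^ (1 / α)) := by
  norm_num [psi, powSum, zero_rpow hα, rpow_rpow_inv zero_le_two hα]

theorem psi_alpha_properties (α : ℝ) (hα : α ∈ Set.Ioo (0:ℝ) 1 ∪ Set.Ioi 1) :
    ConvexOn ℝ (Set.Icc (0:ℝ) 1)
      (fun p : ℝ => α / (α - 1) * (((1 + p) ^ α + (1 - p) ^ α) ^ (1 / α) - 2 ^ (1 / α))) ∧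
    StrictMonoOn
      (fun p : ℝ => α / (α - 1) * (((1 + p) ^ α + (1 - p) ^ α) ^ (1 / α) - 2 ^ (1 / α)))
      (Set.Icc (0:ℝ) 1) ∧
    α / (α - 1) * (((1 + (0:ℝ)) ^ α + (1 - (0:ℝ)) ^ α) ^ (1 / α) - 2 ^ (1 / α)) = 0 ∧
    α / (α - 1) * (((1 + (1:ℝ)) ^ α + (1 - (1:ℝ)) ^ α) ^ (1 / α) - 2 ^ (1 / α)) =
      α / (α - 1) * (2 - 2 ^ (1 / α)) := by
  obtain ⟨hα0, hα1⟩ : 0 < α ∧ α ≠ 1 := by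
    rcases hα with h | h
    · exact ⟨h.1, h.2.ne⟩
    · exact ⟨zero_lt_one.trans h, h.ne'⟩
  exact ⟨(convexOn_psi hα0 hα1).subset (Icc_subset_Icc (by norm_num) le_rfl) (convex_Icc 0 1),
    strictMonoOn_psi hα0 hα1, psi_zero α, psi_one hα0.ne'⟩
end

section
/- For α ∈ (0,1) ∪ (1,∞) and probability distributions P, Q with densities, the Arimoto divergence satisfies ψ_α(D_TV(P||Q)) ≤ D_{f_α}(P||Q) ≤ ψ_α(1)·D_TV(P||Q), where ψ_α(p) = (α/(α-1))·(((1+p)^α + (1−p)^α)^(1/α) − 2^(1/α)) and ψ_α(1) = (α/(α-1))·(2 − 2^(1/α)). -/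
/-!
Write `N(a, b) = (a ^ α + b ^ α) ^ (1 / α)`. It is positively homogeneous and symmetric, convex on
the quadrant for `α > 1` and concave for `α < 1`; for `α < 1` every inequality below is reversed,
which is absorbed by the sign of `α / (α - 1)`.

Symmetry gives `∫ N(p, q) = ∫ N(max p q, min p q)`, and `∫ max = 1 + δ`, `∫ min = 1 - δ` with
`δ = D_TV(P‖Q)`. The lower bound is Jensen for `N`, i.e. Minkowski's integral inequality
`N(∫ f, ∫ g) ≤ ∫ N(f, g)`: integrate the supporting-hyperplane (Hölder) inequality
`a ^ (α - 1) x + b ^ (α - 1) y ≤ N(a, b) ^ (α - 1) N(x, y)` at `(a, b) = (∫ f, ∫ g)` and use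
Euler's identity for the homogeneous `N`. For the upper bound, `max = min + |p - q|` and the
triangle inequality `N(min + |p - q|, min) ≤ N(min, min) + N(|p - q|, 0)` bound the integrand by
`2 ^ (1 / α) min + |p - q|`, whose integral is `2 ^ (1 / α) (1 - δ) + 2 δ`.
-/

open Real MeasureTheory

noncomputable def pairLpNorm (α a b : ℝ) : ℝ := (a ^ α + b ^ α) ^ (1 / α)

section Pointwise

variable {α a b x y : ℝ}

lemma pairLpNorm_nonneg (ha : 0 ≤ a) (hb : 0 ≤ b) : 0 ≤ pairLpNorm α a b := by
  unfold pairLpNorm; positivity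

lemma pairLpNorm_comm (α a b : ℝ) : pairLpNorm α a b = pairLpNorm α b a := by
  rw [pairLpNorm, pairLpNorm, add_comm]

lemma pairLpNorm_rpow (ha : 0 ≤ a) (hb : 0 ≤ b) (t : ℝ) :
    pairLpNorm α a b ^ t = (a ^ α + b ^ α) ^ (t / α) := by
  rw [pairLpNorm, ← rpow_mul (by positivity), one_div_mul_eq_div]

lemma pairLpNorm_zero_right (hα : α ≠ 0) (ha : 0 ≤ a) : pairLpNorm α a 0 = a := by
  rw [pairLpNorm, zero_rpow hα, add_zero, one_div, rpow_rpow_inv ha hα]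

lemma pairLpNorm_self (hα : α ≠ 0) (ha : 0 ≤ a) : pairLpNorm α a a = 2 ^ (1 / α) * a := by
  rw [pairLpNorm, ← two_mul, mul_rpow zero_le_two (rpow_nonneg ha α), one_div,
    rpow_rpow_inv ha hα]

lemma pairLpNorm_max_min (α a b : ℝ) : pairLpNorm α (max a b) (min a b) = pairLpNorm α a b := by
  rcases le_total a b with h | h
  · rw [max_eq_right h, min_eq_left h, pairLpNorm_comm]
  · rw [max_eq_left h, min_eq_right h]

lemma rpow_sub_one_mul_self (hα : α ≠ 0) (ha : 0 ≤ a) : a ^ (α - 1) * a = a ^ α := by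
  rw [← rpow_add_one' ha (by simpa using hα), sub_add_cancel]

lemma pairLpNorm_rpow_sub_one_mul_self (hα : α ≠ 0) (ha : 0 ≤ a) (hb : 0 ≤ b) :
    pairLpNorm α a b ^ (α - 1) * pairLpNorm α a b = a ^ (α - 1) * a + b ^ (α - 1) * b := by
  rw [rpow_sub_one_mul_self hα (pairLpNorm_nonneg ha hb), pairLpNorm_rpow ha hb, div_self hα,
    rpow_one, rpow_sub_one_mul_self hα ha, rpow_sub_one_mul_self hα hb]

lemma mul_rpow_add_mul_rpow_le {p q r : ℝ} (hpqr : p.HolderTriple q r)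
    (ha : 0 ≤ a) (hb : 0 ≤ b) (hx : 0 ≤ x) (hy : 0 ≤ y) :
    (a * x) ^ r + (b * y) ^ r ≤ (a ^ p + b ^ p) ^ (r / p) * (x ^ q + y ^ q) ^ (r / q) := by
  simpa [Fin.sum_univ_two] using Real.Lr_rpow_le_Lp_mul_Lq_of_nonneg Finset.univ
    (f := ![a, b]) (g := ![x, y]) hpqr (by simp [Fin.forall_fin_two, ha, hb])
    (by simp [Fin.forall_fin_two, hx, hy])

lemma rpow_sub_one_mul_add_le_pairLpNorm (hα : 1 < α)
    (ha : 0 ≤ a) (hb : 0 ≤ b) (hx : 0 ≤ x) (hy : 0 ≤ y) :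
    a ^ (α - 1) * x + b ^ (α - 1) * y ≤ pairLpNorm α a b ^ (α - 1) * pairLpNorm α x y := by
  have hα' : α - 1 ≠ 0 := by linarith
  have key := mul_rpow_add_mul_rpow_le (Real.HolderConjugate.conjExponent hα).symm
    (rpow_nonneg ha (α - 1)) (rpow_nonneg hb (α - 1)) hx hy
  have hpow (c : ℝ) (hc : 0 ≤ c) : (c ^ (α - 1)) ^ conjExponent α = c ^ α := by
    rw [← rpow_mul hc, conjExponent, mul_div_cancel₀ _ hα']
  rwa [hpow a ha, hpow b hb, rpow_one, rpow_one, conjExponent, one_div_div,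
    ← pairLpNorm_rpow ha hb] at key

lemma pairLpNorm_mul_le_rpow_sub_one_mul_add (h0 : 0 < α) (h1 : α < 1)
    (ha : 0 < a) (hb : 0 < b) (hx : 0 ≤ x) (hy : 0 ≤ y) :
    pairLpNorm α a b ^ (α - 1) * pairLpNorm α x y ≤ a ^ (α - 1) * x + b ^ (α - 1) * y := by
  have h1' : 1 - α ≠ 0 := by linarith
  -- Reverse Hölder: Hölder with exponents `1` and `α / (1 - α)` applied to
  -- `x = (a ^ (α - 1) * x) * a ^ (1 - α)`.
  have htriple : (1 : ℝ).HolderTriple (α / (1 - α)) α :=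
    ⟨by field_simp; ring, one_pos, div_pos h0 (by linarith)⟩
  have key := mul_rpow_add_mul_rpow_le htriple
    (by positivity : 0 ≤ a ^ (α - 1) * x) (by positivity : 0 ≤ b ^ (α - 1) * y)
    (rpow_nonneg ha.le (1 - α)) (rpow_nonneg hb.le (1 - α))
  have hcancel (c z : ℝ) (hc : 0 < c) : c ^ (α - 1) * z * c ^ (1 - α) = z := by
    rw [mul_right_comm, ← rpow_add hc, sub_add_sub_cancel', sub_self, rpow_zero, one_mul]
  have hpow (c : ℝ) (hc : 0 ≤ c) : (c ^ (1 - α)) ^ (α / (1 - α)) = c ^ α := by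
    rw [← rpow_mul hc, mul_div_cancel₀ _ h1']
  rw [hcancel a x ha, hcancel b y hb, hpow a ha.le, hpow b hb.le, rpow_one, rpow_one, div_one,
    div_div_cancel₀ h0.ne'] at key
  set L := a ^ (α - 1) * x + b ^ (α - 1) * y
  have hS : 0 < a ^ α + b ^ α := by positivity
  have hNab := pairLpNorm_nonneg (α := α) ha.le hb.le
  have hNxy := pairLpNorm_nonneg (α := α) hx hy
  rw [← rpow_le_rpow_iff (by positivity) (by positivity) h0, mul_rpow (by positivity) hNxy,
    ← rpow_mul hNab, pairLpNorm_rpow ha.le hb.le, pairLpNorm_rpow hx hy,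
    mul_div_cancel_right₀ _ h0.ne', div_self h0.ne', rpow_one]
  calc (a ^ α + b ^ α) ^ (α - 1) * (x ^ α + y ^ α)
      ≤ (a ^ α + b ^ α) ^ (α - 1) * (L ^ α * (a ^ α + b ^ α) ^ (1 - α)) := by gcongr
    _ = L ^ α := by
      rw [mul_left_comm, ← rpow_add hS, sub_add_sub_cancel', sub_self, rpow_zero, mul_one]

end Pointwise

section Integral

variable {X : Type*} [MeasurableSpace X] {μ : Measure X} {α : ℝ} {f g : X → ℝ}

lemma integral_pairLpNorm_of_integral_eq_zero (hα : α ≠ 0) (hf : ∀ x, 0 ≤ f x)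
    (hg : ∀ x, 0 ≤ g x) (hgi : Integrable g μ) (hB : ∫ x, g x ∂μ = 0) :
    ∫ x, pairLpNorm α (f x) (g x) ∂μ = pairLpNorm α (∫ x, f x ∂μ) (∫ x, g x ∂μ) := by
  have hg0 : g =ᵐ[μ] 0 := (integral_eq_zero_iff_of_nonneg hg hgi).1 hB
  rw [hB, pairLpNorm_zero_right hα (integral_nonneg hf)]
  refine integral_congr_ae ?_
  filter_upwards [hg0] with x hx
  rw [hx, Pi.zero_apply, pairLpNorm_zero_right hα (hf x)]

lemma pairLpNorm_integral_le_integral (hα : 1 < α) (hf : ∀ x, 0 ≤ f x) (hg : ∀ x, 0 ≤ g x)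
    (hfi : Integrable f μ) (hgi : Integrable g μ)
    (hi : Integrable (fun x => pairLpNorm α (f x) (g x)) μ) :
    pairLpNorm α (∫ x, f x ∂μ) (∫ x, g x ∂μ) ≤ ∫ x, pairLpNorm α (f x) (g x) ∂μ := by
  set A := ∫ x, f x ∂μ
  set B := ∫ x, g x ∂μ
  have hA : 0 ≤ A := integral_nonneg hf
  have hB : 0 ≤ B := integral_nonneg hg
  rcases (pairLpNorm_nonneg (α := α) hA hB).eq_or_lt with hN | hN
  · rw [← hN]
    exact integral_nonneg fun x => pairLpNorm_nonneg (hf x) (hg x)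
  have key := integral_mono (f := fun x => A ^ (α - 1) * f x + B ^ (α - 1) * g x)
    ((hfi.const_mul _).add (hgi.const_mul _)) (hi.const_mul _)
    fun x => rpow_sub_one_mul_add_le_pairLpNorm hα hA hB (hf x) (hg x)
  rw [integral_add (hfi.const_mul _) (hgi.const_mul _), integral_const_mul, integral_const_mul,
    integral_const_mul, ← pairLpNorm_rpow_sub_one_mul_self (by linarith) hA hB] at key
  exact le_of_mul_le_mul_left key (rpow_pos_of_pos hN _)

lemma integral_le_pairLpNorm_integral (h0 : 0 < α) (h1 : α < 1) (hf : ∀ x, 0 ≤ f x)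
    (hg : ∀ x, 0 ≤ g x) (hfi : Integrable f μ) (hgi : Integrable g μ)
    (hi : Integrable (fun x => pairLpNorm α (f x) (g x)) μ) :
    ∫ x, pairLpNorm α (f x) (g x) ∂μ ≤ pairLpNorm α (∫ x, f x ∂μ) (∫ x, g x ∂μ) := by
  set A := ∫ x, f x ∂μ
  set B := ∫ x, g x ∂μ
  -- The supporting inequality needs `A, B > 0`: `0 ^ (α - 1)` is `0` here, not `∞`.
  rcases (integral_nonneg hf : 0 ≤ A).eq_or_lt with hA | hA
  · simp_rw [pairLpNorm_comm α _ B, pairLpNorm_comm α (f _)]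
    exact (integral_pairLpNorm_of_integral_eq_zero h0.ne' hg hf hfi hA.symm).le
  rcases (integral_nonneg hg : 0 ≤ B).eq_or_lt with hB | hB
  · exact (integral_pairLpNorm_of_integral_eq_zero h0.ne' hf hg hgi hB.symm).le
  have key := integral_mono (g := fun x => A ^ (α - 1) * f x + B ^ (α - 1) * g x)
    (hi.const_mul _) ((hfi.const_mul _).add (hgi.const_mul _))
    fun x => pairLpNorm_mul_le_rpow_sub_one_mul_add h0 h1 hA hB (hf x) (hg x)
  rw [integral_add (hfi.const_mul _) (hgi.const_mul _), integral_const_mul, integral_const_mul,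
    integral_const_mul, ← pairLpNorm_rpow_sub_one_mul_self h0.ne' hA.le hB.le] at key
  exact le_of_mul_le_mul_left key (rpow_pos_of_pos (by unfold pairLpNorm; positivity) _)

end Integral

section Minkowski

variable {α a b x₁ x₂ y₁ y₂ : ℝ}

lemma pairLpNorm_add_le (hα : 1 < α) (hx₁ : 0 ≤ x₁) (hx₂ : 0 ≤ x₂) (hy₁ : 0 ≤ y₁)
    (hy₂ : 0 ≤ y₂) :
    pairLpNorm α (x₁ + x₂) (y₁ + y₂) ≤ pairLpNorm α x₁ y₁ + pairLpNorm α x₂ y₂ := by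
  simpa [Fin.sum_univ_two] using pairLpNorm_integral_le_integral (μ := Measure.count)
    (f := ![x₁, x₂]) (g := ![y₁, y₂]) hα (by simp [Fin.forall_fin_two, *])
    (by simp [Fin.forall_fin_two, *]) .of_finite .of_finite .of_finite

lemma pairLpNorm_add_pairLpNorm_le (h0 : 0 < α) (h1 : α < 1) (hx₁ : 0 ≤ x₁) (hx₂ : 0 ≤ x₂)
    (hy₁ : 0 ≤ y₁) (hy₂ : 0 ≤ y₂) :
    pairLpNorm α x₁ y₁ + pairLpNorm α x₂ y₂ ≤ pairLpNorm α (x₁ + x₂) (y₁ + y₂) := by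
  simpa [Fin.sum_univ_two] using integral_le_pairLpNorm_integral (μ := Measure.count)
    (f := ![x₁, x₂]) (g := ![y₁, y₂]) h0 h1 (by simp [Fin.forall_fin_two, *])
    (by simp [Fin.forall_fin_two, *]) .of_finite .of_finite .of_finite

lemma pairLpNorm_le_min_add_abs_sub (hα : 1 < α) (ha : 0 ≤ a) (hb : 0 ≤ b) :
    pairLpNorm α a b ≤ 2 ^ (1 / α) * min a b + |a - b| := by
  have hmin : 0 ≤ min a b := le_min ha hb
  calc pairLpNorm α a b = pairLpNorm α (min a b + |a - b|) (min a b + 0) := by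
        rw [add_zero, ← max_sub_min_eq_abs', add_sub_cancel, pairLpNorm_max_min]
    _ ≤ pairLpNorm α (min a b) (min a b) + pairLpNorm α |a - b| 0 :=
        pairLpNorm_add_le hα hmin (abs_nonneg _) hmin le_rfl
    _ = 2 ^ (1 / α) * min a b + |a - b| := by
        rw [pairLpNorm_self (by linarith) hmin,
          pairLpNorm_zero_right (by linarith) (abs_nonneg _)]

lemma min_add_abs_sub_le_pairLpNorm (h0 : 0 < α) (h1 : α < 1) (ha : 0 ≤ a) (hb : 0 ≤ b) :
    2 ^ (1 / α) * min a b + |a - b| ≤ pairLpNorm α a b := by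
  have hmin : 0 ≤ min a b := le_min ha hb
  calc 2 ^ (1 / α) * min a b + |a - b|
      = pairLpNorm α (min a b) (min a b) + pairLpNorm α |a - b| 0 := by
        rw [pairLpNorm_self h0.ne' hmin, pairLpNorm_zero_right h0.ne' (abs_nonneg _)]
    _ ≤ pairLpNorm α (min a b + |a - b|) (min a b + 0) :=
        pairLpNorm_add_pairLpNorm_le h0 h1 hmin (abs_nonneg _) hmin le_rfl
    _ = pairLpNorm α a b := by
        rw [add_zero, ← max_sub_min_eq_abs', add_sub_cancel, pairLpNorm_max_min]

end Minkowski

section Densities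

variable {X : Type*} [MeasurableSpace X] {μ : Measure X} {α : ℝ} {p q : X → ℝ}

lemma integral_max_min_eq (hpi : Integrable p μ) (hqi : Integrable q μ)
    (hp1 : ∫ x, p x ∂μ = 1) (hq1 : ∫ x, q x ∂μ = 1) :
    ∫ x, max (p x) (q x) ∂μ = 1 + (1 / 2) * ∫ x, |p x - q x| ∂μ ∧
      ∫ x, min (p x) (q x) ∂μ = 1 - (1 / 2) * ∫ x, |p x - q x| ∂μ := by
  have hmaxi : Integrable (fun x => max (p x) (q x)) μ := hpi.sup hqi
  have hmini : Integrable (fun x => min (p x) (q x)) μ := hpi.inf hqi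
  have hsum : ∫ x, max (p x) (q x) ∂μ + ∫ x, min (p x) (q x) ∂μ = 2 := by
    rw [← integral_add hmaxi hmini]
    simp_rw [max_add_min]
    rw [integral_add hpi hqi, hp1, hq1]; norm_num
  have hdiff : ∫ x, max (p x) (q x) ∂μ - ∫ x, min (p x) (q x) ∂μ = ∫ x, |p x - q x| ∂μ := by
    rw [← integral_sub hmaxi hmini]
    simp_rw [max_sub_min_eq_abs']
  constructor <;> linarith

lemma pairLpNorm_integral_max_min_le_integral (hα : 1 < α) (hp : ∀ x, 0 ≤ p x)
    (hq : ∀ x, 0 ≤ q x) (hpi : Integrable p μ) (hqi : Integrable q μ)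
    (hi : Integrable (fun x => pairLpNorm α (p x) (q x)) μ) :
    pairLpNorm α (∫ x, max (p x) (q x) ∂μ) (∫ x, min (p x) (q x) ∂μ) ≤
      ∫ x, pairLpNorm α (p x) (q x) ∂μ := by
  simp_rw [← pairLpNorm_max_min α (p _)] at hi ⊢
  exact pairLpNorm_integral_le_integral hα (fun x => le_max_of_le_left (hp x))
    (fun x => le_min (hp x) (hq x)) (hpi.sup hqi) (hpi.inf hqi) hi

lemma integral_le_pairLpNorm_integral_max_min (h0 : 0 < α) (h1 : α < 1) (hp : ∀ x, 0 ≤ p x)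
    (hq : ∀ x, 0 ≤ q x) (hpi : Integrable p μ) (hqi : Integrable q μ)
    (hi : Integrable (fun x => pairLpNorm α (p x) (q x)) μ) :
    ∫ x, pairLpNorm α (p x) (q x) ∂μ ≤
      pairLpNorm α (∫ x, max (p x) (q x) ∂μ) (∫ x, min (p x) (q x) ∂μ) := by
  simp_rw [← pairLpNorm_max_min α (p _)] at hi ⊢
  exact integral_le_pairLpNorm_integral h0 h1 (fun x => le_max_of_le_left (hp x))
    (fun x => le_min (hp x) (hq x)) (hpi.sup hqi) (hpi.inf hqi) hi

lemma integral_pairLpNorm_le_integral_min_add (hα : 1 < α) (hp : ∀ x, 0 ≤ p x)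
    (hq : ∀ x, 0 ≤ q x) (hpi : Integrable p μ) (hqi : Integrable q μ)
    (hi : Integrable (fun x => pairLpNorm α (p x) (q x)) μ) :
    ∫ x, pairLpNorm α (p x) (q x) ∂μ ≤
      2 ^ (1 / α) * ∫ x, min (p x) (q x) ∂μ + ∫ x, |p x - q x| ∂μ := by
  rw [← integral_const_mul, ← integral_add (by exact (hpi.inf hqi).const_mul _)
    (by exact (hpi.sub hqi).abs)]
  exact integral_mono hi (((hpi.inf hqi).const_mul _).add (hpi.sub hqi).abs)
    fun x => pairLpNorm_le_min_add_abs_sub hα (hp x) (hq x)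

lemma integral_min_add_le_integral_pairLpNorm (h0 : 0 < α) (h1 : α < 1) (hp : ∀ x, 0 ≤ p x)
    (hq : ∀ x, 0 ≤ q x) (hpi : Integrable p μ) (hqi : Integrable q μ)
    (hi : Integrable (fun x => pairLpNorm α (p x) (q x)) μ) :
    2 ^ (1 / α) * ∫ x, min (p x) (q x) ∂μ + ∫ x, |p x - q x| ∂μ ≤
      ∫ x, pairLpNorm α (p x) (q x) ∂μ := by
  rw [← integral_const_mul, ← integral_add (by exact (hpi.inf hqi).const_mul _)
    (by exact (hpi.sub hqi).abs)]
  exact integral_mono (((hpi.inf hqi).const_mul _).add (hpi.sub hqi).abs) hi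
    fun x => min_add_abs_sub_le_pairLpNorm h0 h1 (hp x) (hq x)

end Densities

theorem arimoto_tv_sandwich_general {X : Type*} [MeasurableSpace X] (μ : Measure X)
    (α : ℝ) (hα : α ∈ Set.Ioo (0:ℝ) 1 ∪ Set.Ioi 1)
    (p q : X → ℝ)
    (hp : ∀ x, 0 ≤ p x) (hq : ∀ x, 0 ≤ q x)
    (hpi : Integrable p μ) (hqi : Integrable q μ)
    (hi : Integrable (fun x => (p x ^ α + q x ^ α) ^ (1 / α)) μ)
    (hp1 : ∫ x, p x ∂μ = 1) (hq1 : ∫ x, q x ∂μ = 1) :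
    α / (α - 1) *
        (((1 + (1 / 2) * ∫ x, |p x - q x| ∂μ) ^ α +
          (1 - (1 / 2) * ∫ x, |p x - q x| ∂μ) ^ α) ^ (1 / α) - 2 ^ (1 / α)) ≤
      α / (α - 1) * ((∫ x, (p x ^ α + q x ^ α) ^ (1 / α) ∂μ) - 2 ^ (1 / α)) ∧
    α / (α - 1) * ((∫ x, (p x ^ α + q x ^ α) ^ (1 / α) ∂μ) - 2 ^ (1 / α)) ≤
      (α / (α - 1) * (2 - 2 ^ (1 / α))) * ((1 / 2) * ∫ x, |p x - q x| ∂μ) := by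
  change Integrable (fun x => pairLpNorm α (p x) (q x)) μ at hi
  obtain ⟨hmax, hmin⟩ := integral_max_min_eq hpi hqi hp1 hq1
  set v := (1 / 2) * ∫ x, |p x - q x| ∂μ with hv
  set I := ∫ x, pairLpNorm α (p x) (q x) ∂μ
  change α / (α - 1) * (pairLpNorm α (1 + v) (1 - v) - 2 ^ (1 / α)) ≤
      α / (α - 1) * (I - 2 ^ (1 / α)) ∧
    α / (α - 1) * (I - 2 ^ (1 / α)) ≤ α / (α - 1) * (2 - 2 ^ (1 / α)) * v
  rcases hα with ⟨h0, h1⟩ | (h1 : 1 < α)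
  · have hk : α / (α - 1) < 0 := div_neg_of_pos_of_neg h0 (by linarith)
    have lower := integral_le_pairLpNorm_integral_max_min h0 h1 hp hq hpi hqi hi
    have upper := integral_min_add_le_integral_pairLpNorm h0 h1 hp hq hpi hqi hi
    rw [hmax, hmin] at lower
    rw [hmin] at upper
    exact ⟨mul_le_mul_of_nonpos_left (by linarith) hk.le, by nlinarith⟩
  · have hk : 0 < α / (α - 1) := div_pos (by linarith) (by linarith)
    have lower := pairLpNorm_integral_max_min_le_integral h1 hp hq hpi hqi hi
    have upper := integral_pairLpNorm_le_integral_min_add h1 hp hq hpi hqi hi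
    rw [hmax, hmin] at lower
    rw [hmin] at upper
    exact ⟨mul_le_mul_of_nonneg_left (by linarith) hk.le, by nlinarith⟩

theorem arimoto_tv_sandwich {X : Type*} [MeasurableSpace X] (μ : Measure X)
    (α : ℝ) (hα : α ∈ Set.Ioo (0:ℝ) 1 ∪ Set.Ioi 1)
    (p q : X → ℝ) (hpm : Measurable p) (hqm : Measurable q)
    (hp : ∀ x, 0 ≤ p x) (hq : ∀ x, 0 ≤ q x)
    (hpi : Integrable p μ) (hqi : Integrable q μ)
    (hi : Integrable (fun x => (p x ^ α + q x ^ α) ^ (1 / α)) μ)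
    (hp1 : ∫ x, p x ∂μ = 1) (hq1 : ∫ x, q x ∂μ = 1) :
    α / (α - 1) *
        (((1 + (1 / 2) * ∫ x, |p x - q x| ∂μ) ^ α +
          (1 - (1 / 2) * ∫ x, |p x - q x| ∂μ) ^ α) ^ (1 / α) - 2 ^ (1 / α)) ≤
      α / (α - 1) * ((∫ x, (p x ^ α + q x ^ α) ^ (1 / α) ∂μ) - 2 ^ (1 / α)) ∧
    α / (α - 1) * ((∫ x, (p x ^ α + q x ^ α) ^ (1 / α) ∂μ) - 2 ^ (1 / α)) ≤
      (α / (α - 1) * (2 - 2 ^ (1 / α))) * ((1 / 2) * ∫ x, |p x - q x| ∂μ) :=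
  arimoto_tv_sandwich_general μ α hα p q hp hq hpi hqi hi hp1 hq1
end
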